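/- Let n ≥ 3 be an integer and let U₊ be the standard half-space bubble. The weighted second moment ∫_{ℝⁿ₊} t²·‖∇U₊(y′,t)‖² dy′ dt is finite if and only if n ≥ 5 (in particular it is infinite when n = 3 or n = 4). -/

import Mathlib

open MeasureTheory

/-- The standard half-space bubble `U₊(y′,t) = (‖y′‖² + (1+t)²)^{-(n-2)/2}`. -/
noncomputable def Uplus (n : ℕ) (y : EuclideanSpace ℝ (Fin (n - 1))) (t : ℝ) : ℝ :=
  (‖y‖ ^ 2 + (1 + t) ^ 2) ^ (-(((n : ℝ) - 2) / 2))

/-- Squared norm of the tangential gradient `∇′U₊`. -/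
noncomputable def tanGradSq (n : ℕ) (y : EuclideanSpace ℝ (Fin (n - 1))) (t : ℝ) : ℝ :=
  ‖fderiv ℝ (fun y' => Uplus n y' t) y‖ ^ 2

/-- Square of the normal derivative `∂ₜU₊`. -/
noncomputable def normDerSq (n : ℕ) (y : EuclideanSpace ℝ (Fin (n - 1))) (t : ℝ) : ℝ :=
  (deriv (fun t' => Uplus n y t') t) ^ 2

/-- Squared norm of the full gradient `∇U₊ = (∇′U₊, ∂ₜU₊)`. -/
noncomputable def gradSq (n : ℕ) (y : EuclideanSpace ℝ (Fin (n - 1))) (t : ℝ) : ℝ :=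
  tanGradSq n y t + normDerSq n y t

open Real ENNReal

lemma gradSq_eq (n : ℕ) (y : EuclideanSpace ℝ (Fin (n-1))) (t : ℝ) (ht : 0 < t) :
    gradSq n y t = ((n:ℝ) - 2)^2 * (‖y‖ ^ 2 + (1 + t) ^ 2) ^ (-((n:ℝ) - 1)) := by
  set q : ℝ := -(((n : ℝ) - 2) / 2) with hq
  set s : ℝ := ‖y‖ ^ 2 + (1 + t) ^ 2 with hsdef
  have hs : (0:ℝ) < s := by positivity
  -- tangential part
  have h1 : HasFDerivAt (fun y' : EuclideanSpace ℝ (Fin (n-1)) => ‖y'‖ ^ 2 + (1 + t) ^ 2)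
      (2 • (innerSL ℝ y)) y := by
    simpa using ((hasFDerivAt_id y).norm_sq).add_const ((1+t)^2)
  have hfd : fderiv ℝ (fun y' => Uplus n y' t) y
      = (q * s ^ (q - 1)) • (2 • (innerSL ℝ y)) := (h1.rpow_const (Or.inl hs.ne')).fderiv
  have htan : tanGradSq n y t = q^2 * (s ^ (q-1))^2 * (4 * ‖y‖^2) := by
    rw [tanGradSq, hfd]
    rw [norm_smul, ← Nat.cast_smul_eq_nsmul ℝ (2:ℕ), norm_smul, innerSL_apply_norm]
    have h2 : |q * s ^ (q-1)| = |q| * s ^ (q-1) := by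
      rw [abs_mul, abs_of_pos (rpow_pos_of_pos hs _)]
    rw [Real.norm_eq_abs, h2]
    have h2n : ‖((2:ℕ):ℝ)‖ = 2 := by norm_num
    rw [h2n]
    simp only [mul_pow, sq_abs]
    ring
  -- normal part
  have h3 : HasDerivAt (fun t' : ℝ => ‖y‖ ^ 2 + (1 + t') ^ 2) (2 * (1 + t)) t := by
    have : HasDerivAt (fun t' : ℝ => (1 + t') ^ 2) (2 * (1 + t)) t := by
      simpa using ((hasDerivAt_id t).const_add 1).fun_pow 2
    simpa using this.const_add (‖y‖^2)
  have hder : deriv (fun t' => Uplus n y t') t = 2 * (1 + t) * q * s ^ (q - 1) := by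
    have := (h3.rpow_const (p := q) (Or.inl hs.ne')).deriv
    simpa [Uplus] using this
  have hnor : normDerSq n y t = q^2 * (s ^ (q-1))^2 * (4 * (1+t)^2) := by
    rw [normDerSq, hder]; ring
  -- combine
  rw [gradSq, htan, hnor]
  have hsq : (s ^ (q-1))^2 = s ^ (2*q - 2) := by
    rw [← rpow_natCast (s ^ (q-1)) 2, ← rpow_mul hs.le]; norm_num; ring_nf
  have hcomb : q^2 * (s ^ (q-1))^2 * (4 * ‖y‖^2) + q^2 * (s ^ (q-1))^2 * (4 * (1+t)^2)
      = (4 * q^2) * (s ^ (2*q-2) * s) := by rw [hsq]; ring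
  rw [hcomb]
  have hss : s ^ (2*q-2) * s = s ^ (2*q-1) := by
    nth_rewrite 2 [← rpow_one s]
    rw [← rpow_add hs]; ring_nf
  rw [hss]
  have h4q : 4 * q^2 = ((n:ℝ)-2)^2 := by rw [hq]; ring
  have hexp : 2*q - 1 = -((n:ℝ)-1) := by rw [hq]; ring
  rw [h4q, hexp]

lemma lintegral_scaled (d : ℕ) (p a : ℝ) (ha : 0 < a) :
    ∫⁻ y : EuclideanSpace ℝ (Fin d), ENNReal.ofReal ((‖y‖^2 + a^2) ^ (-p))
      = ENNReal.ofReal (a ^ ((d:ℝ) - 2*p)) *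
        ∫⁻ z : EuclideanSpace ℝ (Fin d), ENNReal.ofReal ((1 + ‖z‖^2) ^ (-p)) := by
  set g : EuclideanSpace ℝ (Fin d) → ℝ≥0∞ :=
    fun y => ENNReal.ofReal ((‖y‖^2 + a^2) ^ (-p)) with hg
  have hgm : Measurable g := by fun_prop
  have hmap : Measure.map (a • ·) (volume : Measure (EuclideanSpace ℝ (Fin d)))
      = ENNReal.ofReal (|(a ^ Module.finrank ℝ (EuclideanSpace ℝ (Fin d)))⁻¹|) • volume :=
    Measure.map_addHaar_smul volume ha.ne'
  have key : ∫⁻ z, g (a • z) = ENNReal.ofReal (|(a ^ Module.finrank ℝ (EuclideanSpace ℝ (Fin d)))⁻¹|)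
      * ∫⁻ y, g y := by
    rw [← lintegral_map hgm (measurable_const_smul a), hmap, lintegral_smul_measure, smul_eq_mul]
  have hfr : Module.finrank ℝ (EuclideanSpace ℝ (Fin d)) = d := finrank_euclideanSpace_fin
  have hcomp : ∀ z : EuclideanSpace ℝ (Fin d),
      g (a • z) = ENNReal.ofReal (a ^ (-(2*p))) * ENNReal.ofReal ((1 + ‖z‖^2) ^ (-p)) := by
    intro z
    have h1 : ‖a • z‖^2 + a^2 = a^2 * (1 + ‖z‖^2) := by
      rw [norm_smul, Real.norm_eq_abs, abs_of_pos ha]; ring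
    rw [hg]
    simp only [h1]
    rw [Real.mul_rpow (by positivity) (by positivity),
      ENNReal.ofReal_mul (by positivity)]
    congr 2
    rw [← Real.rpow_natCast a 2, ← Real.rpow_mul ha.le]
    norm_num
  have key2 : ∫⁻ z, g (a • z)
      = ENNReal.ofReal (a ^ (-(2*p))) * ∫⁻ z : EuclideanSpace ℝ (Fin d), ENNReal.ofReal ((1 + ‖z‖^2) ^ (-p)) := by
    simp_rw [hcomp]
    rw [lintegral_const_mul' _ _ ENNReal.ofReal_ne_top]
  have habs : |(a ^ Module.finrank ℝ (EuclideanSpace ℝ (Fin d)))⁻¹| = a ^ (-(d:ℝ)) := by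
    rw [hfr, abs_of_pos (by positivity), ← Real.rpow_natCast a d, ← Real.rpow_neg_one,
      ← Real.rpow_mul ha.le]
    ring_nf
  rw [key2, habs] at key
  have hmul : ENNReal.ofReal (a ^ ((d:ℝ))) * ENNReal.ofReal (a ^ (-(d:ℝ))) = 1 := by
    rw [← ENNReal.ofReal_mul (by positivity), ← Real.rpow_add ha]
    simp
  calc ∫⁻ y, g y = (ENNReal.ofReal (a ^ ((d:ℝ))) * ENNReal.ofReal (a ^ (-(d:ℝ)))) * ∫⁻ y, g y := by
        rw [hmul, one_mul]
    _ = ENNReal.ofReal (a ^ ((d:ℝ))) * (ENNReal.ofReal (a ^ (-(d:ℝ))) * ∫⁻ y, g y) := by ring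
    _ = ENNReal.ofReal (a ^ ((d:ℝ))) * (ENNReal.ofReal (a ^ (-(2*p))) * ∫⁻ z : EuclideanSpace ℝ (Fin d), ENNReal.ofReal ((1 + ‖z‖^2) ^ (-p))) := by
        rw [← key]
    _ = ENNReal.ofReal (a ^ ((d:ℝ) - 2*p)) * ∫⁻ z : EuclideanSpace ℝ (Fin d), ENNReal.ofReal ((1 + ‖z‖^2) ^ (-p)) := by
        rw [← mul_assoc, ← ENNReal.ofReal_mul (by positivity), ← Real.rpow_add ha]
        ring_nf

lemma C_lt_top (n : ℕ) (hn : 3 ≤ n) :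
    (∫⁻ z : EuclideanSpace ℝ (Fin (n-1)), ENNReal.ofReal ((1 + ‖z‖^2) ^ (-((n:ℝ)-1)))) < ⊤ := by
  have hr : (Module.finrank ℝ (EuclideanSpace ℝ (Fin (n-1))) : ℝ) < 2*((n:ℝ)-1) := by
    rw [finrank_euclideanSpace_fin]
    have h1 : ((n-1:ℕ):ℝ) = (n:ℝ) - 1 := by
      rw [Nat.cast_sub (by omega)]; norm_num
    rw [h1]
    have : (3:ℝ) ≤ (n:ℝ) := by exact_mod_cast hn
    linarith
  have hint := integrable_rpow_neg_one_add_norm_sq (μ := (volume : Measure (EuclideanSpace ℝ (Fin (n-1))))) hr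
  have hexp : -(2*((n:ℝ)-1))/2 = -((n:ℝ)-1) := by ring
  rw [hexp] at hint
  exact hint.lintegral_lt_top

lemma C_pos (n : ℕ) :
    0 < ∫⁻ z : EuclideanSpace ℝ (Fin (n-1)), ENNReal.ofReal ((1 + ‖z‖^2) ^ (-((n:ℝ)-1))) := by
  have hm : Measurable (fun z : EuclideanSpace ℝ (Fin (n-1)) =>
      ENNReal.ofReal ((1 + ‖z‖^2) ^ (-((n:ℝ)-1)))) := by fun_prop
  rw [lintegral_pos_iff_support hm]
  have : Function.support (fun z : EuclideanSpace ℝ (Fin (n-1)) =>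
      ENNReal.ofReal ((1 + ‖z‖^2) ^ (-((n:ℝ)-1)))) = Set.univ := by
    ext z; simp only [Function.mem_support, Set.mem_univ, iff_true]
    simp only [ne_eq, ENNReal.ofReal_eq_zero, not_le]
    positivity
  rw [this]
  exact isOpen_univ.measure_pos volume ⟨0, trivial⟩

lemma T_lt_top (n : ℕ) (hn : 5 ≤ n) :
    (∫⁻ t in Set.Ioi (0:ℝ), ENNReal.ofReal (t^2 * (1+t) ^ (-((n:ℝ)-1)))) < ⊤ := by
  have hn' : (5:ℝ) ≤ (n:ℝ) := by exact_mod_cast hn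
  have hbound : ∀ t ∈ Set.Ioi (0:ℝ),
      ENNReal.ofReal (t^2 * (1+t) ^ (-((n:ℝ)-1))) ≤ ENNReal.ofReal ((1+t) ^ (3-(n:ℝ))) := by
    intro t ht
    simp only [Set.mem_Ioi] at ht
    apply ENNReal.ofReal_le_ofReal
    have h1 : t^2 * (1+t) ^ (-((n:ℝ)-1)) ≤ (1+t)^2 * (1+t) ^ (-((n:ℝ)-1)) := by
      apply mul_le_mul_of_nonneg_right _ (rpow_pos_of_pos (by linarith) _).le
      nlinarith
    have h2 : (1+t:ℝ)^2 * (1+t) ^ (-((n:ℝ)-1)) = (1+t) ^ (3-(n:ℝ)) := by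
      rw [← Real.rpow_natCast (1+t) 2, ← Real.rpow_add (by linarith)]
      congr 1
      push_cast; ring
    linarith [h1, h2.symm.le.trans (le_refl ((1+t:ℝ)^2 * (1+t) ^ (-((n:ℝ)-1))))]
  calc (∫⁻ t in Set.Ioi (0:ℝ), ENNReal.ofReal (t^2 * (1+t) ^ (-((n:ℝ)-1))))
      ≤ ∫⁻ t in Set.Ioi (0:ℝ), ENNReal.ofReal ((1+t) ^ (3-(n:ℝ))) :=
        setLIntegral_mono (by fun_prop) hbound
    _ ≤ ∫⁻ t in Set.Ioc (0:ℝ) 1 ∪ Set.Ioi 1, ENNReal.ofReal ((1+t) ^ (3-(n:ℝ))) := by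
        apply lintegral_mono_set
        intro x hx
        simp only [Set.mem_Ioi] at hx
        rcases le_or_gt x 1 with h | h
        · exact Or.inl ⟨hx, h⟩
        · exact Or.inr h
    _ = (∫⁻ t in Set.Ioc (0:ℝ) 1, ENNReal.ofReal ((1+t) ^ (3-(n:ℝ))))
        + ∫⁻ t in Set.Ioi (1:ℝ), ENNReal.ofReal ((1+t) ^ (3-(n:ℝ))) :=
        lintegral_union measurableSet_Ioi (Set.Ioc_disjoint_Ioi le_rfl)
    _ < ⊤ := by
        apply ENNReal.add_lt_top.mpr
        constructor
        · calc (∫⁻ t in Set.Ioc (0:ℝ) 1, ENNReal.ofReal ((1+t) ^ (3-(n:ℝ))))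
              ≤ ∫⁻ _ in Set.Ioc (0:ℝ) 1, 1 := by
                apply setLIntegral_mono measurable_const
                intro t ht
                simp only [Set.mem_Ioc] at ht
                have : (1+t:ℝ) ^ (3-(n:ℝ)) ≤ 1 :=
                  rpow_le_one_of_one_le_of_nonpos (by linarith [ht.1]) (by linarith)
                calc ENNReal.ofReal ((1+t) ^ (3-(n:ℝ))) ≤ ENNReal.ofReal 1 :=
                      ENNReal.ofReal_le_ofReal this
                  _ = 1 := ENNReal.ofReal_one
            _ < ⊤ := by
                rw [setLIntegral_one]
                simp [Real.volume_Ioc]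
        · calc (∫⁻ t in Set.Ioi (1:ℝ), ENNReal.ofReal ((1+t) ^ (3-(n:ℝ))))
              ≤ ∫⁻ t in Set.Ioi (1:ℝ), ENNReal.ofReal (t ^ (3-(n:ℝ))) := by
                apply setLIntegral_mono (by fun_prop)
                intro t ht
                simp only [Set.mem_Ioi] at ht
                apply ENNReal.ofReal_le_ofReal
                exact rpow_le_rpow_of_nonpos (by linarith) (by linarith) (by linarith)
            _ < ⊤ := (integrableOn_Ioi_rpow_of_lt (by linarith) zero_lt_one).lintegral_lt_top

lemma T_eq_top (n : ℕ) (hn3 : 3 ≤ n) (hn : n ≤ 4) :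
    (∫⁻ t in Set.Ioi (0:ℝ), ENNReal.ofReal (t^2 * (1+t) ^ (-((n:ℝ)-1)))) = ⊤ := by
  have hn3' : (3:ℝ) ≤ (n:ℝ) := by exact_mod_cast hn3
  have hn4' : (n:ℝ) ≤ 4 := by exact_mod_cast hn
  have hsub : (∫⁻ t in Set.Ioi (1:ℝ), ENNReal.ofReal (t^2 * (1+t) ^ (-((n:ℝ)-1))))
      ≤ ∫⁻ t in Set.Ioi (0:ℝ), ENNReal.ofReal (t^2 * (1+t) ^ (-((n:ℝ)-1))) :=
    lintegral_mono_set (Set.Ioi_subset_Ioi (by norm_num))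
  have hrt : (∫⁻ t in Set.Ioi (1:ℝ), ENNReal.ofReal (t ^ (3-(n:ℝ)))) = ⊤ := by
    by_contra h
    have hI : IntegrableOn (fun t : ℝ => t ^ (3-(n:ℝ))) (Set.Ioi 1) := by
      constructor
      · apply Measurable.aestronglyMeasurable; fun_prop
      · rw [hasFiniteIntegral_iff_norm]
        have : (∫⁻ t in Set.Ioi (1:ℝ), ENNReal.ofReal ‖(t:ℝ) ^ (3-(n:ℝ))‖)
            = ∫⁻ t in Set.Ioi (1:ℝ), ENNReal.ofReal (t ^ (3-(n:ℝ))) := by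
          apply setLIntegral_congr_fun measurableSet_Ioi
          intro t ht
          simp only [Set.mem_Ioi] at ht
          beta_reduce
          rw [Real.norm_eq_abs, abs_of_pos (rpow_pos_of_pos (by linarith) _)]
        rw [this]
        exact lt_top_iff_ne_top.mpr h
    rw [integrableOn_Ioi_rpow_iff zero_lt_one] at hI
    linarith
  have hlow : (∫⁻ t in Set.Ioi (1:ℝ), ENNReal.ofReal (2 ^ (1-(n:ℝ)) * t ^ (3-(n:ℝ))))
      ≤ ∫⁻ t in Set.Ioi (1:ℝ), ENNReal.ofReal (t^2 * (1+t) ^ (-((n:ℝ)-1))) := by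
    apply setLIntegral_mono (by fun_prop)
    intro t ht
    simp only [Set.mem_Ioi] at ht
    apply ENNReal.ofReal_le_ofReal
    have h0t : (0:ℝ) < t := by linarith
    have h1 : ((2:ℝ)*t) ^ (-((n:ℝ)-1)) ≤ (1+t) ^ (-((n:ℝ)-1)) :=
      rpow_le_rpow_of_nonpos (by linarith) (by linarith) (by linarith)
    have h2 : ((2:ℝ)*t) ^ (-((n:ℝ)-1)) = 2 ^ (-((n:ℝ)-1)) * t ^ (-((n:ℝ)-1)) :=
      mul_rpow (by norm_num) h0t.le
    have h3 : 2 ^ (1-(n:ℝ)) * t ^ (3-(n:ℝ)) = t^2 * (2 ^ (-((n:ℝ)-1)) * t ^ (-((n:ℝ)-1))) := by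
      have e1 : (2:ℝ) ^ (1-(n:ℝ)) = 2 ^ (-((n:ℝ)-1)) := by ring_nf
      have e2 : (t:ℝ)^2 * t ^ (-((n:ℝ)-1)) = t ^ (3-(n:ℝ)) := by
        rw [← Real.rpow_natCast t 2, ← Real.rpow_add h0t]
        congr 1
        push_cast; ring
      rw [e1, ← e2]; ring
    rw [h3]
    have h4 : (0:ℝ) ≤ t^2 := sq_nonneg t
    calc t^2 * (2 ^ (-((n:ℝ)-1)) * t ^ (-((n:ℝ)-1))) = t^2 * (((2:ℝ)*t) ^ (-((n:ℝ)-1))) := by rw [h2]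
      _ ≤ t^2 * (1+t) ^ (-((n:ℝ)-1)) := mul_le_mul_of_nonneg_left h1 h4
  have hconst : (∫⁻ t in Set.Ioi (1:ℝ), ENNReal.ofReal (2 ^ (1-(n:ℝ)) * t ^ (3-(n:ℝ)))) = ⊤ := by
    have : ∀ t : ℝ, ENNReal.ofReal (2 ^ (1-(n:ℝ)) * t ^ (3-(n:ℝ)))
        = ENNReal.ofReal (2 ^ (1-(n:ℝ))) * ENNReal.ofReal (t ^ (3-(n:ℝ))) := fun t =>
      ENNReal.ofReal_mul (by positivity)
    simp_rw [this]
    rw [lintegral_const_mul' _ _ ENNReal.ofReal_ne_top, hrt, ENNReal.mul_top]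
    simp only [ne_eq, ENNReal.ofReal_eq_zero, not_le]
    positivity
  exact top_le_iff.mp ((hconst ▸ hlow).trans hsub)

/-- Finiteness dichotomy for the `t²`-weighted second moment of the half-space bubble:
`∫_{ℝⁿ₊} t²‖∇U₊‖² < ∞` iff `n ≥ 5`; in particular it is infinite for `n = 3` and `n = 4`. -/
theorem second_moment_finiteness_dichotomy (n : ℕ) (hn : 3 ≤ n) :
    (((∫⁻ t in Set.Ioi (0 : ℝ), ∫⁻ y : EuclideanSpace ℝ (Fin (n - 1)),
        ENNReal.ofReal (t ^ 2 * gradSq n y t)) < ⊤) ↔ 5 ≤ n)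
    ∧ ((n = 3 ∨ n = 4) →
      (∫⁻ t in Set.Ioi (0 : ℝ), ∫⁻ y : EuclideanSpace ℝ (Fin (n - 1)),
        ENNReal.ofReal (t ^ 2 * gradSq n y t)) = ⊤) := by
  have hn3' : (3:ℝ) ≤ (n:ℝ) := by exact_mod_cast hn
  set C := ∫⁻ z : EuclideanSpace ℝ (Fin (n-1)), ENNReal.ofReal ((1 + ‖z‖^2) ^ (-((n:ℝ)-1))) with hC
  set T := ∫⁻ t in Set.Ioi (0:ℝ), ENNReal.ofReal (t^2 * (1+t) ^ (-((n:ℝ)-1))) with hT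
  set c := ENNReal.ofReal (((n:ℝ)-2)^2) * C with hc
  have hCtop := C_lt_top n hn
  have hCpos := C_pos n
  have hc_ne_top : c ≠ ⊤ := ENNReal.mul_ne_top ENNReal.ofReal_ne_top hCtop.ne
  have hc_ne_zero : c ≠ 0 := by
    apply mul_ne_zero
    · simp only [ne_eq, ENNReal.ofReal_eq_zero, not_le]
      nlinarith
    · exact hCpos.ne'
  have inner_eq : ∀ t ∈ Set.Ioi (0:ℝ),
      (∫⁻ y : EuclideanSpace ℝ (Fin (n-1)), ENNReal.ofReal (t^2 * gradSq n y t))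
        = c * ENNReal.ofReal (t^2 * (1+t) ^ (-((n:ℝ)-1))) := by
    intro t ht
    simp only [Set.mem_Ioi] at ht
    have h1t : (0:ℝ) < 1 + t := by linarith
    have hpt : ∀ y : EuclideanSpace ℝ (Fin (n-1)),
        ENNReal.ofReal (t^2 * gradSq n y t)
          = ENNReal.ofReal (t^2 * ((n:ℝ)-2)^2)
            * ENNReal.ofReal ((‖y‖^2 + (1+t)^2) ^ (-((n:ℝ)-1))) := by
      intro y
      rw [gradSq_eq n y t ht, ← ENNReal.ofReal_mul (by positivity), ← mul_assoc]
    simp_rw [hpt]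
    rw [lintegral_const_mul' _ _ ENNReal.ofReal_ne_top,
      lintegral_scaled (n-1) ((n:ℝ)-1) (1+t) h1t]
    have hd : ((n-1:ℕ):ℝ) - 2*((n:ℝ)-1) = -((n:ℝ)-1) := by
      rw [Nat.cast_sub (by omega)]; push_cast; ring
    rw [hd, ← hC]
    rw [← mul_assoc, ← ENNReal.ofReal_mul (by positivity)]
    rw [show t^2 * ((n:ℝ)-2)^2 * (1+t) ^ (-((n:ℝ)-1))
        = ((n:ℝ)-2)^2 * (t^2 * (1+t) ^ (-((n:ℝ)-1))) from by ring]
    rw [ENNReal.ofReal_mul (by positivity), hc]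
    ring
  have main_eq : (∫⁻ t in Set.Ioi (0 : ℝ), ∫⁻ y : EuclideanSpace ℝ (Fin (n - 1)),
      ENNReal.ofReal (t ^ 2 * gradSq n y t)) = c * T := by
    rw [setLIntegral_congr_fun measurableSet_Ioi inner_eq, hT]
    exact lintegral_const_mul' _ _ hc_ne_top
  constructor
  · constructor
    · intro hI
      by_contra h5
      have h34 : n ≤ 4 := by omega
      rw [main_eq, hT, T_eq_top n hn h34, ENNReal.mul_top hc_ne_zero] at hI
      exact absurd hI (lt_irrefl ⊤)
    · intro h5
      rw [main_eq]
      exact ENNReal.mul_lt_top hc_ne_top.lt_top (hT ▸ T_lt_top n h5)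
  · intro h34
    have h4 : n ≤ 4 := by rcases h34 with h | h <;> omega
    rw [main_eq, hT, T_eq_top n hn h4, ENNReal.mul_top hc_ne_zero]
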